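/- Let F_{d+1} be the Fourier matrix of order d+1, with Lagrange polynomials (ℓ_1(z); …; ℓ_{d+1}(z)) = (1/(d+1)) F_{d+1}^* (1; z). Then the degree-one Lebesgue constant on the complex torus satisfies Λ₁ = max_{z ∈ 𝕋^d} Σ_{j=1}^{d+1} |ℓ_j(z)| ≤ √(d+1). -/

import Mathlib

/-!
Since `F_n Fₙᴴ = n I`, the map `v ↦ Fₙᴴ v` multiplies Euclidean norms by `√n`. On the torus the
vector `(1; z)` has norm `√(d+1)`, so `(ℓ_j(z))_j = (d+1)⁻¹ F_{d+1}ᴴ (1; z)` is a unit vector, and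
Cauchy–Schwarz bounds its `ℓ¹` norm by `√(d+1)`.
-/

open Matrix

/-- The Fourier matrix `F_n = [ω^{jk}]_{1 ≤ j,k ≤ n}` of order `n`, where `ω = exp(2πi/n)`. -/
noncomputable def fourierMatrix (n : ℕ) : Matrix (Fin n) (Fin n) ℂ :=
  Matrix.of fun j k : Fin n =>
    Complex.exp (2 * Real.pi * Complex.I * (((j : ℕ) : ℂ) + 1) * (((k : ℕ) : ℂ) + 1) / n)

/-- The values at `z ∈ ℂ^d` of the degree-one fundamental Lagrange polynomials associated to
the `d+1` points of the torus obtained by deleting the first column of the Fourier matrix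
`F_{d+1}`:  `(ℓ_1(z); …; ℓ_{d+1}(z)) = (1/(d+1)) F_{d+1}^* (1; z)`. -/
noncomputable def torusLagrange (d : ℕ) (z : Fin d → ℂ) (i : Fin (d + 1)) : ℂ :=
  (((d : ℂ) + 1)⁻¹) * ((fourierMatrix (d + 1))ᴴ *ᵥ (Fin.cons 1 z : Fin (d + 1) → ℂ)) i

open Finset

lemma geom_sum_eq_ite_of_pow_eq_one {K : Type*} [Field K] [DecidableEq K] {ζ : K} {n : ℕ}
    (hζ : ζ ^ n = 1) :
    ∑ i ∈ range n, ζ ^ i = if ζ = 1 then (n : K) else 0 := by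
  split_ifs with h
  · simp [h]
  · have hmul : (∑ i ∈ range n, ζ ^ i) * (ζ - 1) = 0 := by rw [geom_sum_mul, hζ, sub_self]
    exact (mul_eq_zero.mp hmul).resolve_right (sub_ne_zero.mpr h)

lemma IsPrimitiveRoot.pow_succ_eq_pow_succ_iff {M : Type*} [CommMonoidWithZero M]
    [IsCancelMulZero M] [Nontrivial M] {ω : M} {n : ℕ} (hω : IsPrimitiveRoot ω n) (k l : Fin n) :
    ω ^ ((k : ℕ) + 1) = ω ^ ((l : ℕ) + 1) ↔ k = l := by
  have hω0 : ω ≠ 0 := hω.ne_zero k.pos.ne'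
  rw [pow_succ, pow_succ, mul_left_inj' hω0, Fin.ext_iff]
  exact ⟨hω.pow_inj k.isLt l.isLt, congrArg _⟩

lemma ofReal_sum_norm_sq_eq_star_dotProduct {𝕜 ι : Type*} [RCLike 𝕜] [Fintype ι] (w : ι → 𝕜) :
    ((∑ i, ‖w i‖ ^ 2 : ℝ) : 𝕜) = star w ⬝ᵥ w := by
  simp [dotProduct, RCLike.conj_mul]

lemma sum_norm_sq_conjTranspose_mulVec {𝕜 m n : Type*} [RCLike 𝕜] [Fintype m] [DecidableEq m]
    [Fintype n] {A : Matrix m n 𝕜} {c : ℝ} (hA : A * Aᴴ = (c : 𝕜) • 1) (v : m → 𝕜) :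
    ∑ i, ‖(Aᴴ *ᵥ v) i‖ ^ 2 = c * ∑ i, ‖v i‖ ^ 2 := by
  apply RCLike.ofReal_injective (K := 𝕜)
  rw [RCLike.ofReal_mul, ofReal_sum_norm_sq_eq_star_dotProduct,
    ofReal_sum_norm_sq_eq_star_dotProduct, star_mulVec, conjTranspose_conjTranspose,
    dotProduct_mulVec, vecMul_vecMul, hA, vecMul_smul, vecMul_one, smul_dotProduct, smul_eq_mul]

lemma sum_le_sqrt_card_of_sum_sq_eq_one {ι : Type*} [Fintype ι] {x : ι → ℝ}
    (hx : ∑ i, x i ^ 2 = 1) : ∑ i, x i ≤ √(Fintype.card ι) := by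
  simpa [hx] using Real.sum_mul_le_sqrt_mul_sqrt univ (fun _ ↦ 1) x

open Complex in
lemma fourierMatrix_apply_eq_pow (n : ℕ) (j k : Fin n) :
    fourierMatrix n j k = exp (2 * Real.pi * I / n) ^ (((j : ℕ) + 1) * ((k : ℕ) + 1)) := by
  rw [fourierMatrix, of_apply, ← exp_nat_mul]
  push_cast
  ring_nf

open Complex in
lemma fourierMatrix_mul_conjTranspose (n : ℕ) :
    fourierMatrix n * (fourierMatrix n)ᴴ = (n : ℂ) • 1 := by
  ext k l
  set ω := exp (2 * Real.pi * I / n)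
  have hω : IsPrimitiveRoot ω n := isPrimitiveRoot_exp n k.pos.ne'
  set ζ := ω ^ ((k : ℕ) + 1) * (ω ^ ((l : ℕ) + 1))⁻¹
  have hF : ∀ i j, fourierMatrix n i j = ω ^ (((i : ℕ) + 1) * ((j : ℕ) + 1)) :=
    fourierMatrix_apply_eq_pow n
  have hstar : ∀ m : ℕ, star (ω ^ m) = (ω ^ m)⁻¹ := fun m ↦
    (inv_eq_conj (by rw [norm_pow, hω.norm'_eq_one k.pos.ne', one_pow])).symm
  have hentry : ∀ j : Fin n,
      fourierMatrix n k j * star (fourierMatrix n l j) = ζ ^ ((j : ℕ) + 1) := fun j ↦ by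
    rw [hF, hF, hstar, pow_mul, pow_mul, ← inv_pow, ← mul_pow]
  have hζn : ζ ^ n = 1 := by
    rw [mul_pow, inv_pow, ← pow_mul, ← pow_mul, mul_comm _ n, mul_comm _ n, pow_mul, pow_mul,
      hω.pow_eq_one, one_pow, one_pow, inv_one, one_mul]
  have hζ1 : ζ = 1 ↔ k = l := by
    rw [mul_inv_eq_one₀ (pow_ne_zero _ (hω.ne_zero k.pos.ne')), hω.pow_succ_eq_pow_succ_iff]
  rw [mul_apply]
  simp only [conjTranspose_apply, hentry]
  rw [Fin.sum_univ_eq_sum_range (fun j ↦ ζ ^ (j + 1)), sum_congr rfl fun j _ ↦ pow_succ' ζ j,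
    ← mul_sum, geom_sum_eq_ite_of_pow_eq_one hζn, Matrix.smul_apply, one_apply]
  by_cases hkl : k = l
  · simp [hkl, hζ1.mpr hkl]
  · simp [hkl, mt hζ1.mp hkl]

lemma sum_norm_sq_torusLagrange (d : ℕ) (z : Fin d → ℂ) (hz : ∀ k, ‖z k‖ = 1) :
    ∑ j, ‖torusLagrange d z j‖ ^ 2 = 1 := by
  have hF : fourierMatrix (d + 1) * (fourierMatrix (d + 1))ᴴ = (((d : ℝ) + 1 : ℝ) : ℂ) • 1 :=
    mod_cast fourierMatrix_mul_conjTranspose (d + 1)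
  have hv : ∑ k, ‖(Fin.cons 1 z : Fin (d + 1) → ℂ) k‖ ^ 2 = d + 1 := by
    simp [Fin.sum_univ_succ, hz, add_comm]
  simp only [torusLagrange, norm_mul, mul_pow, ← mul_sum]
  rw [sum_norm_sq_conjTranspose_mulVec (c := (d : ℝ) + 1) hF, hv]
  have hnorm : ‖(d : ℂ) + 1‖ = d + 1 := by exact_mod_cast Complex.norm_natCast (d + 1)
  rw [norm_inv, hnorm]
  field_simp

theorem fourier_lebesgue_le_general (d : ℕ) (z : Fin d → ℂ)
    (hz : ∀ k, ‖z k‖ = 1) :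
    ∑ j : Fin (d + 1), ‖torusLagrange d z j‖ ≤ Real.sqrt ((d : ℝ) + 1) := by
  simpa using sum_le_sqrt_card_of_sum_sq_eq_one (sum_norm_sq_torusLagrange d z hz)

/-- the degree-one Lebesgue constant for the Fourier points on the complex
torus satisfies `Λ₁ = max_{z ∈ 𝕋^d} ∑ⱼ |ℓⱼ(z)| ≤ √(d+1)`. -/
theorem fourier_lebesgue_le (d : ℕ) (hd : 1 ≤ d) (z : Fin d → ℂ)
    (hz : ∀ k, ‖z k‖ = 1) :
    ∑ j : Fin (d + 1), ‖torusLagrange d z j‖ ≤ Real.sqrt ((d : ℝ) + 1) :=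
  fourier_lebesgue_le_general d z hz
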